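/- arXiv:2306.09985 — 3 statements merged into one kernel-verified Lean document; each statement's English description precedes it below -/
import Mathlib

section
/- Let v1, v2 be linearly independent future-pointing light-like vectors in R^{2,1}, and let n̂ = (v2 ⊠ v1)/⟨v1,v2⟩ be the associated unit space-like vector. If v1 and v2 are infinitesimally deformed by Killing fields X1, X2 ∈ R^{2,1} (i.e., v_i(t) = v_i + t(X_i ⊠ v_i) + O(t^2)), then the derivative at t=0 of the horoball-connection length l(t) = ln(-⟨v1(t),v2(t)⟩/2) equals ⟨X2 - X1, n̂⟩. -/
/-!
The derivative of `t ↦ ⟨v1(t), v2(t)⟩` is `⟨X1 ⊠ v1, v2⟩ + ⟨v1, X2 ⊠ v2⟩`, which by the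
cyclic symmetry of the Minkowski triple product equals `⟨X2 - X1, v2 ⊠ v1⟩`; the logarithm
divides this by `⟨v1, v2⟩`. That pairing is nonzero because two linearly independent light-like
vectors `v1, v2` of `ℝ^{2,1}` are never orthogonal: otherwise the combination of them with
vanishing time coordinate would be a nonzero light-like vector in a spacelike plane.
-/

/-- The Minkowski bilinear form of signature (2,1) on `ℝ³`. -/
def mdot (u v : Fin 3 → ℝ) : ℝ := u 0 * v 0 + u 1 * v 1 - u 2 * v 2

/-- The Minkowski cross product on `ℝ^{2,1}`. -/
def mcross (u v : Fin 3 → ℝ) : Fin 3 → ℝ :=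
  ![-(u 1) * v 2 + u 2 * v 1, -(u 2) * v 0 + u 0 * v 2, u 0 * v 1 - u 1 * v 0]

lemma mdot_smul_right (a : ℝ) (u v : Fin 3 → ℝ) : mdot u (a • v) = a * mdot u v := by
  simp only [mdot, Pi.smul_apply, smul_eq_mul]
  ring

lemma mdot_mcross_add_mdot_mcross (X1 X2 v1 v2 : Fin 3 → ℝ) :
    mdot (mcross X1 v1) v2 + mdot v1 (mcross X2 v2) = mdot (X2 - X1) (mcross v2 v1) := by
  simp only [mdot, mcross, Pi.sub_apply, Matrix.cons_val_zero, Matrix.cons_val_one,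
    Matrix.cons_val_two, Matrix.head_cons, Matrix.tail_cons]
  ring

lemma eq_zero_of_mdot_self_eq_zero_of_apply_two_eq_zero {w : Fin 3 → ℝ}
    (hw : mdot w w = 0) (hw2 : w 2 = 0) : w = 0 := by
  simp only [mdot, hw2, mul_zero, sub_zero] at hw
  have h0 : w 0 = 0 := by nlinarith [sq_nonneg (w 0), sq_nonneg (w 1)]
  have h1 : w 1 = 0 := by nlinarith [sq_nonneg (w 0), sq_nonneg (w 1)]
  ext i
  fin_cases i <;> assumption

lemma apply_two_ne_zero_of_mdot_self_eq_zero {v : Fin 3 → ℝ} (hv : mdot v v = 0) (hv0 : v ≠ 0) :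
    v 2 ≠ 0 :=
  fun h ↦ hv0 (eq_zero_of_mdot_self_eq_zero_of_apply_two_eq_zero hv h)

lemma mdot_ne_zero_of_linearIndependent_of_mdot_self_eq_zero {v1 v2 : Fin 3 → ℝ}
    (h1 : mdot v1 v1 = 0) (h2 : mdot v2 v2 = 0) (hli : LinearIndependent ℝ ![v1, v2]) :
    mdot v1 v2 ≠ 0 := by
  intro h12
  have hv1 : v1 2 ≠ 0 := apply_two_ne_zero_of_mdot_self_eq_zero h1 (by simpa using hli.ne_zero 0)
  -- `w` lies in the spacelike plane `{w 2 = 0}` and is light-like because `⟨v1, v2⟩ = 0`.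
  set w := (-v2 2) • v1 + v1 2 • v2 with hw
  have hww : mdot w w = 0 := by
    simp only [hw, mdot, Pi.add_apply, Pi.smul_apply, smul_eq_mul] at h1 h2 h12 ⊢
    linear_combination v2 2 ^ 2 * h1 + v1 2 ^ 2 * h2 - 2 * v1 2 * v2 2 * h12
  have hw2 : w 2 = 0 := by
    simp only [hw, Pi.add_apply, Pi.smul_apply, smul_eq_mul]
    ring
  exact hv1 (LinearIndependent.pair_iff.mp hli _ _
    (eq_zero_of_mdot_self_eq_zero_of_apply_two_eq_zero hww hw2)).2

theorem HasDerivAt.mdot {f g : ℝ → Fin 3 → ℝ} {f' g' : Fin 3 → ℝ} {t : ℝ}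
    (hf : HasDerivAt f f' t) (hg : HasDerivAt g g' t) :
    HasDerivAt (fun s ↦ _root_.mdot (f s) (g s))
      (_root_.mdot f' (g t) + _root_.mdot (f t) g') t := by
  have hf' := hasDerivAt_pi.mp hf
  have hg' := hasDerivAt_pi.mp hg
  refine ((((hf' 0).mul (hg' 0)).add ((hf' 1).mul (hg' 1))).sub
    ((hf' 2).mul (hg' 2))).congr_deriv ?_
  simp only [_root_.mdot]
  ring

theorem HasDerivAt.log_neg_div_two {c : ℝ → ℝ} {c' t : ℝ} (hc : HasDerivAt c c' t)
    (hct : c t ≠ 0) : HasDerivAt (fun s ↦ Real.log (-(c s) / 2)) (c' / c t) t := by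
  convert (hc.neg.div_const 2).log (by simpa using hct) using 1
  · rfl
  · rw [Pi.neg_apply]
    field_simp

theorem horoLength_deriv_general (v1 v2 X1 X2 : Fin 3 → ℝ)
    (h1 : mdot v1 v1 = 0) (h2 : mdot v2 v2 = 0)
    (hli : LinearIndependent ℝ ![v1, v2])
    (v1t v2t : ℝ → Fin 3 → ℝ)
    (hv10 : v1t 0 = v1) (hv20 : v2t 0 = v2)
    (hd1 : HasDerivAt v1t (mcross X1 v1) 0)
    (hd2 : HasDerivAt v2t (mcross X2 v2) 0) :
    HasDerivAt (fun t => Real.log (-(mdot (v1t t) (v2t t)) / 2))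
      (mdot (X2 - X1) ((mdot v1 v2)⁻¹ • mcross v2 v1)) 0 := by
  have hc := mdot_ne_zero_of_linearIndependent_of_mdot_self_eq_zero h1 h2 hli
  have hpair := hd1.mdot hd2
  rw [hv10, hv20, mdot_mcross_add_mdot_mcross] at hpair
  convert hpair.log_neg_div_two (by rwa [hv10, hv20]) using 1
  rw [hv10, hv20, mdot_smul_right, inv_mul_eq_div]

/-- If two decorated ideal points `v1, v2` (linearly independent future-pointing
light-like vectors) are infinitesimally deformed by Killing fields `X1, X2`
(i.e. `vᵢ(t) = vᵢ + t (Xᵢ ⊠ vᵢ) + O(t²)`), then the derivative at `t = 0` of the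
horoball-connection length `l(t) = ln(-⟨v1(t),v2(t)⟩/2)` equals `⟨X2 - X1, n̂⟩`,
where `n̂ = (v2 ⊠ v1)/⟨v1,v2⟩` is the associated unit space-like vector. -/
theorem horoLength_deriv (v1 v2 X1 X2 : Fin 3 → ℝ)
    (h1 : mdot v1 v1 = 0) (h2 : mdot v2 v2 = 0)
    (hf1 : 0 < v1 2) (hf2 : 0 < v2 2)
    (hli : LinearIndependent ℝ ![v1, v2])
    (v1t v2t : ℝ → Fin 3 → ℝ)
    (hv10 : v1t 0 = v1) (hv20 : v2t 0 = v2)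
    (hd1 : HasDerivAt v1t (mcross X1 v1) 0)
    (hd2 : HasDerivAt v2t (mcross X2 v2) 0) :
    HasDerivAt (fun t => Real.log (-(mdot (v1t t) (v2t t)) / 2))
      (mdot (X2 - X1) ((mdot v1 v2)⁻¹ • mcross v2 v1)) 0 :=
  horoLength_deriv_general v1 v2 X1 X2 h1 h2 hli v1t v2t hv10 hv20 hd1 hd2
end

section
/- Let v1, v2 be linearly independent future-pointing light-like vectors in R^{2,1} and let w1, w2 ∈ R^{2,1}. Let A_i = w_i + v_i^⊥ be the affine light-like planes containing the photons L(w_i, v_i) = w_i + R v_i. If v ∈ L(w1,v1) ∩ A2 and v' ∈ L(w2,v2) ∩ A1, then v - v' = (⟨w1 - w2, v1 ⊠ v2⟩ / ‖v1 ⊠ v2‖^2) (v1 ⊠ v2). -/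
section Minkowski

variable (u v d : Fin 3 → ℝ)

lemma mdot_comm : mdot u v = mdot v u := by
  simp only [mdot]; ring

lemma mdot_add_left : mdot (u + v) d = mdot u d + mdot v d := by
  simp only [mdot, Pi.add_apply]; ring

lemma mdot_sub_left : mdot (u - v) d = mdot u d - mdot v d := by
  simp only [mdot, Pi.sub_apply]; ring

lemma mdot_smul_left (a : ℝ) : mdot (a • u) v = a * mdot u v := by
  simp only [mdot, Pi.smul_apply, smul_eq_mul]; ring

lemma mdot_mcross_self :
    mdot (mcross u v) (mcross u v) = mdot u v ^ 2 - mdot u u * mdot v v := by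
  simp [mdot, mcross]; ring

lemma mdot_mcross_self_smul :
    mdot (mcross u v) (mcross u v) • d =
      (mdot u v * mdot d v - mdot v v * mdot d u) • u
        + (mdot u v * mdot d u - mdot u u * mdot d v) • v
        + mdot d (mcross u v) • mcross u v := by
  ext i; fin_cases i <;> simp [mdot, mcross] <;> ring

end Minkowski

lemma mdot_ne_zero_of_isotropic {u v : Fin 3 → ℝ} (hu : mdot u u = 0) (hv : mdot v v = 0)
    (huv : LinearIndependent ℝ ![u, v]) : mdot u v ≠ 0 := by
  intro h
  have hu2 : u 2 ≠ 0 := by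
    intro hu2
    refine huv.ne_zero 0 (funext fun i => ?_)
    simp only [mdot, hu2] at hu
    fin_cases i <;> simp [hu2] <;> nlinarith [sq_nonneg (u 0), sq_nonneg (u 1)]
  have hsq : (u 2 * v 0 - v 2 * u 0) ^ 2 + (u 2 * v 1 - v 2 * u 1) ^ 2 = 0 := by
    unfold mdot at hu hv h
    linear_combination u 2 ^ 2 * hv + v 2 ^ 2 * hu - 2 * u 2 * v 2 * h
  have hdep : (-v 2) • u + u 2 • v = 0 := by
    ext i
    fin_cases i <;> simp <;>
      nlinarith [sq_nonneg (u 2 * v 0 - v 2 * u 0), sq_nonneg (u 2 * v 1 - v 2 * u 1)]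
  exact hu2 (LinearIndependent.pair_iff.mp huv _ _ hdep).2

theorem photon_relative_motion_general (v1 v2 w1 w2 v v' : Fin 3 → ℝ)
    (h1 : mdot v1 v1 = 0) (h2 : mdot v2 v2 = 0)
    (hli : LinearIndependent ℝ ![v1, v2])
    (hv_photon : ∃ s : ℝ, v = w1 + s • v1)
    (hv_A2 : mdot (v - w2) v2 = 0)
    (hv'_photon : ∃ t : ℝ, v' = w2 + t • v2)
    (hv'_A1 : mdot (v' - w1) v1 = 0) :
    v - v' = (mdot (w1 - w2) (mcross v1 v2) /
        mdot (mcross v1 v2) (mcross v1 v2)) • mcross v1 v2 := by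
  obtain ⟨s, rfl⟩ := hv_photon
  obtain ⟨t, rfl⟩ := hv'_photon
  have hX : mdot (mcross v1 v2) (mcross v1 v2) = mdot v1 v2 ^ 2 := by
    rw [mdot_mcross_self, h1, h2, zero_mul, sub_zero]
  have hX0 : mdot (mcross v1 v2) (mcross v1 v2) ≠ 0 :=
    hX ▸ pow_ne_zero 2 (mdot_ne_zero_of_isotropic h1 h2 hli)
  have hdec := mdot_mcross_self_smul v1 v2 (w1 - w2)
  apply smul_right_injective _ hX0
  simp only [smul_smul, mul_div_cancel₀ _ hX0]
  simp only [mdot_add_left, mdot_sub_left, mdot_smul_left, mdot_comm v2 v1, h1, h2]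
    at hv_A2 hv'_A1 hdec ⊢
  rw [hX] at hdec ⊢
  linear_combination (norm := module)
    hdec + (mdot v1 v2 * hv_A2) • v1 - (mdot v1 v2 * hv'_A1) • v2

/-- Relative motion of two photons: if `v` is on the photon `L(w1,v1)` and in the
affine light-like plane `A2 = w2 + v2^⊥`, and `v'` is on `L(w2,v2)` and in
`A1 = w1 + v1^⊥`, then `v - v' = (⟨w1-w2, v1⊠v2⟩/‖v1⊠v2‖²) (v1⊠v2)`. -/
theorem photon_relative_motion (v1 v2 w1 w2 v v' : Fin 3 → ℝ)
    (h1 : mdot v1 v1 = 0) (h2 : mdot v2 v2 = 0)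
    (hf1 : 0 < v1 2) (hf2 : 0 < v2 2)
    (hli : LinearIndependent ℝ ![v1, v2])
    (hv_photon : ∃ s : ℝ, v = w1 + s • v1)
    (hv_A2 : mdot (v - w2) v2 = 0)
    (hv'_photon : ∃ t : ℝ, v' = w2 + t • v2)
    (hv'_A1 : mdot (v' - w1) v1 = 0) :
    v - v' = (mdot (w1 - w2) (mcross v1 v2) /
        mdot (mcross v1 v2) (mcross v1 v2)) • mcross v1 v2 :=
  photon_relative_motion_general v1 v2 w1 w2 v v' h1 h2 hli hv_photon hv_A2 hv'_photon hv'_A1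
end

section
/- Two photons L(w1,v1) = w1 + R v1 and L(w2,v2) = w2 + R v2, directed by linearly independent future-pointing light-like vectors v1, v2 in R^{2,1}, are disjoint if and only if ⟨w1 - w2, v1 ⊠ v2⟩ ≠ 0. -/
/-!
If the photons meet, `w1 - w2` lies in `span (v1, v2)`, which is orthogonal to `v1 ⊠ v2`.
Conversely, two independent light-like vectors are never orthogonal, so `p = ⟨v1, v2⟩ ≠ 0`
and `⟨v1 ⊠ v2, v1 ⊠ v2⟩ = p²`; expanding `w1 - w2` in the frame `v1, v2, v1 ⊠ v2` shows that
it lies in `span (v1, v2)` as soon as it is orthogonal to `v1 ⊠ v2`.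
-/

section Minkowski

variable {u v w : Fin 3 → ℝ}

theorem mdot_add_smul_mcross (a b : ℝ) (u v : Fin 3 → ℝ) :
    mdot (a • u + b • v) (mcross u v) = 0 := by
  simp only [mdot, mcross, Pi.add_apply, Pi.smul_apply, smul_eq_mul, Matrix.cons_val_zero,
    Matrix.cons_val_one, Matrix.cons_val_two, Matrix.head_cons, Matrix.tail_cons]
  ring

theorem mdot_mcross_mcross (u v : Fin 3 → ℝ) :
    mdot (mcross u v) (mcross u v) = mdot u v ^ 2 - mdot u u * mdot v v := by
  simp only [mdot, mcross, Matrix.cons_val_zero, Matrix.cons_val_one, Matrix.cons_val_two,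
    Matrix.head_cons, Matrix.tail_cons]
  ring

theorem mdot_mcross_mcross_smul (u v w : Fin 3 → ℝ) :
    mdot (mcross u v) (mcross u v) • w =
      (mdot w v * mdot u v - mdot w u * mdot v v) • u +
      (mdot w u * mdot u v - mdot w v * mdot u u) • v + mdot w (mcross u v) • mcross u v := by
  funext i
  fin_cases i <;>
  · simp only [mdot, mcross, Pi.add_apply, Pi.smul_apply, smul_eq_mul, Matrix.cons_val_zero,
      Matrix.cons_val_one, Matrix.cons_val_two, Matrix.head_cons, Matrix.tail_cons,
      Fin.zero_eta, Fin.mk_one, Fin.reduceFinMk]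
    ring

theorem eq_zero_of_mdot_self_eq_zero (hu : mdot u u = 0) (h2 : u 2 = 0) : u = 0 := by
  simp only [mdot, h2, mul_zero, sub_zero] at hu
  have h0 : u 0 = 0 := by nlinarith [sq_nonneg (u 0), sq_nonneg (u 1)]
  have h1 : u 1 = 0 := by nlinarith [sq_nonneg (u 0), sq_nonneg (u 1)]
  funext i
  fin_cases i <;> assumption

theorem smul_eq_smul_of_mdot_eq_zero (hu : mdot u u = 0) (hv : mdot v v = 0)
    (huv : mdot u v = 0) : v 2 • u = u 2 • v := by
  simp only [mdot] at hu hv huv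
  have hsq : (v 2 * u 0 - u 2 * v 0) ^ 2 + (v 2 * u 1 - u 2 * v 1) ^ 2 = 0 := by
    linear_combination (v 2) ^ 2 * hu + (u 2) ^ 2 * hv - 2 * (u 2) * (v 2) * huv
  have h0 : v 2 * u 0 - u 2 * v 0 = 0 := by
    nlinarith [sq_nonneg (v 2 * u 0 - u 2 * v 0), sq_nonneg (v 2 * u 1 - u 2 * v 1)]
  have h1 : v 2 * u 1 - u 2 * v 1 = 0 := by
    nlinarith [sq_nonneg (v 2 * u 0 - u 2 * v 0), sq_nonneg (v 2 * u 1 - u 2 * v 1)]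
  funext i
  fin_cases i
  · simpa [sub_eq_zero] using h0
  · simpa [sub_eq_zero] using h1
  · simp only [Fin.reduceFinMk, Pi.smul_apply, smul_eq_mul, mul_comm]

theorem mdot_ne_zero_of_linearIndependent (hu : mdot u u = 0) (hv : mdot v v = 0)
    (hli : LinearIndependent ℝ ![u, v]) : mdot u v ≠ 0 := by
  intro huv
  have hpar := smul_eq_smul_of_mdot_eq_zero hu hv huv
  obtain ⟨-, hu2⟩ := LinearIndependent.pair_iff.mp hli (v 2) (-u 2)
    (by rw [neg_smul, hpar, add_neg_cancel])
  have hu0 : u = 0 := eq_zero_of_mdot_self_eq_zero hu (neg_eq_zero.mp hu2)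
  exact hli.ne_zero 0 (by simpa using hu0)

theorem exists_eq_add_smul_of_mdot_mcross_eq_zero (hu : mdot u u = 0) (hv : mdot v v = 0)
    (huv : mdot u v ≠ 0) (hw : mdot w (mcross u v) = 0) :
    ∃ a b : ℝ, w = a • u + b • v := by
  refine ⟨mdot w v / mdot u v, mdot w u / mdot u v, ?_⟩
  have hexp := mdot_mcross_mcross_smul u v w
  simp only [mdot_mcross_mcross, hu, hv, hw, mul_zero, sub_zero, zero_smul, add_zero] at hexp
  rw [← smul_right_inj (pow_ne_zero 2 huv), hexp, smul_add, smul_smul, smul_smul]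
  congr 2 <;> field_simp

end Minkowski

theorem photons_disjoint_iff_general (v1 v2 w1 w2 : Fin 3 → ℝ)
    (h1 : mdot v1 v1 = 0) (h2 : mdot v2 v2 = 0)
    (hli : LinearIndependent ℝ ![v1, v2]) :
    (∀ s t : ℝ, w1 + s • v1 ≠ w2 + t • v2) ↔ mdot (w1 - w2) (mcross v1 v2) ≠ 0 := by
  have hmeet : ∀ s t : ℝ, w1 + s • v1 = w2 + t • v2 ↔ w1 - w2 = (-s) • v1 + t • v2 := by
    intro s t
    constructor <;> intro h <;> linear_combination (norm := module) h
  simp only [ne_eq, ← not_exists, not_iff_not, hmeet]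
  constructor
  · rintro ⟨s, t, hw⟩
    rw [hw]
    exact mdot_add_smul_mcross _ _ v1 v2
  · intro hw
    obtain ⟨a, b, hab⟩ := exists_eq_add_smul_of_mdot_mcross_eq_zero h1 h2
      (mdot_ne_zero_of_linearIndependent h1 h2 hli) hw
    exact ⟨-a, b, by rw [neg_neg, hab]⟩

/-- Two photons `w1 + ℝ v1` and `w2 + ℝ v2`, directed by linearly independent
future-pointing light-like vectors, are disjoint iff `⟨w1 - w2, v1 ⊠ v2⟩ ≠ 0`. -/
theorem photons_disjoint_iff (v1 v2 w1 w2 : Fin 3 → ℝ)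
    (h1 : mdot v1 v1 = 0) (h2 : mdot v2 v2 = 0)
    (hf1 : 0 < v1 2) (hf2 : 0 < v2 2)
    (hli : LinearIndependent ℝ ![v1, v2]) :
    (∀ s t : ℝ, w1 + s • v1 ≠ w2 + t • v2) ↔ mdot (w1 - w2) (mcross v1 v2) ≠ 0 :=
  photons_disjoint_iff_general v1 v2 w1 w2 h1 h2 hli
end
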